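/- arXiv:1105.5180 — 4 statements merged into one kernel-verified Lean document; each statement's English description precedes it below -/
import Mathlib

section
/- Let n > 2 be an integer and let A ∈ ℂ[z] have degree at most n−1. Then max_{|z|=1} |A(z)| ≤ (2 log n) · max_{0≤k<n} |A(ζ_n^k)|. -/
/-!
Lagrange interpolation at the `n`-th roots of unity gives
`n A(z) = ∑ₖ A(ζᵏ) Dₙ(z ζ⁻ᵏ)` with `Dₙ(w) = ∑_{j<n} wʲ`, so `|A(z)|` is bounded by
`max_k |A(ζᵏ)|` times `(1/n) ∑ₖ |Dₙ(e^{i(θ - 2πk/n)})|`. This sum is `2π/n`-periodic and even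
in `θ`, so one may take `θ = 2β` with `0 ≤ β ≤ π/(2n)`. There `|Dₙ(e^{2ix})| ≤ 1/|sin x|`, and
lower bounds for `sin` from its concavity bound the terms for `k = 0, 1, n - 1` by `n`, `2n/3`,
`2n/(3√3)` and the others by `n/(2k-1) + n/(2(n-k))`. Comparing `1/x` with
`½ log((x+1)/(x-1))` telescopes the latter into a logarithm, and the total is at most
`2n log n`.
-/

noncomputable section

open Polynomial Filter

/-- The primitive `n`-th root of unity `e^{2πi/n}` in `ℂ`. -/
def zetaC (n : ℕ) : ℂ := Complex.exp (2 * Real.pi * Complex.I / n)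

/-- The `L_α` norm of a polynomial on the unit circle. -/
def lnorm (α : ℝ) (A : Polynomial ℂ) : ℝ :=
  ((2 * Real.pi)⁻¹ * ∫ θ in (0:ℝ)..(2 * Real.pi),
      ‖A.eval (Complex.exp (Complex.I * θ))‖ ^ α) ^ α⁻¹

/-- The merit factor `F(A) = ‖A‖₂⁴ / (‖A‖₄⁴ - ‖A‖₂⁴)`. -/
def meritF (A : Polynomial ℂ) : ℝ :=
  (lnorm 2 A) ^ 4 / ((lnorm 4 A) ^ 4 - (lnorm 2 A) ^ 4)

/-- The reciprocal merit factor `1/F(A) = (‖A‖₄⁴ - ‖A‖₂⁴) / ‖A‖₂⁴`. -/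
def invMF (A : Polynomial ℂ) : ℝ :=
  ((lnorm 4 A) ^ 4 - (lnorm 2 A) ^ 4) / (lnorm 2 A) ^ 4

/-- The rotation `A_r(z) = z^{-⌊nr⌋} A(z) mod (z^n - 1)`. -/
def rot (n : ℕ) (r : ℝ) (A : Polynomial ℂ) : Polynomial ℂ :=
  (Polynomial.X ^ (((-⌊(n : ℝ) * r⌋) % (n : ℤ)).toNat) * A) % (Polynomial.X ^ n - 1)

/-- The character polynomial `J(z) = ∑_{j=1}^{n-1} (j|n) z^j`. -/
def charPoly (n : ℕ) : Polynomial ℂ :=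
  ∑ j ∈ Finset.range n, Polynomial.C ((jacobiSym j n : ℤ) : ℂ) * Polynomial.X ^ j

/-- `f(r) = 1/(1/6 + 8(|r|-1/4)²)` for `-1/2 < r ≤ 1/2`, extended with period 1. -/
def fLit (r : ℝ) : ℝ :=
  1 / (1/6 + 8 * (|(if Int.fract r ≤ 1/2 then Int.fract r else Int.fract r - 1)| - 1/4) ^ 2)

/-- `𝒱_n`: polynomials `∑_{j=0}^{n-1} v_j z^j` with `v_j ∈ {0,1,-1}` and
`v_j = 0 ↔ gcd(j,n) = 1`. -/
def VSet (n : ℕ) : Set (Polynomial ℂ) :=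
  {V | (∀ j, n ≤ j → V.coeff j = 0) ∧
       ∀ j < n, (V.coeff j = 0 ∨ V.coeff j = 1 ∨ V.coeff j = -1) ∧
         (V.coeff j = 0 ↔ Nat.gcd j n = 1)}

/-- The Littlewood-completion polynomial `V(z) = ∑_{0≤j<n, gcd(j,n)>1} z^j`. -/
def Vall (n : ℕ) : Polynomial ℂ :=
  ∑ j ∈ Finset.range n, if Nat.gcd j n = 1 then 0 else Polynomial.X ^ j

/-- `V(z) = ∑_{0≤j<n, gcd(j,n)>1} (j | n/gcd(j,n)) z^j`. -/
def Vjac (n : ℕ) : Polynomial ℂ :=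
  ∑ j ∈ Finset.range n, if Nat.gcd j n = 1 then 0
    else Polynomial.C ((jacobiSym j (n / Nat.gcd j n) : ℤ) : ℂ) * Polynomial.X ^ j

open Finset

lemma Finset.sum_range_succ_eq_of_eq {M : Type*} [AddCommMonoid M] {f : ℕ → M} {n : ℕ}
    (hf : f n = f 0) : ∑ k ∈ range n, f (k + 1) = ∑ k ∈ range n, f k := by
  cases n with
  | zero => simp
  | succ m => rw [sum_range_succ, hf, sum_range_succ']

lemma Finset.sum_range_eq_add_sum_Ico_add {M : Type*} [AddCommMonoid M] (f : ℕ → M) {n : ℕ}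
    (hn : 3 ≤ n) : ∑ k ∈ range n, f k = f 0 + f 1 + ∑ k ∈ Ico 2 (n - 1), f k + f (n - 1) := by
  obtain ⟨m, rfl⟩ : ∃ m, n = m + 3 := ⟨n - 3, by omega⟩
  rw [show m + 3 - 1 = m + 2 by omega, sum_range_succ, range_eq_Ico,
    sum_eq_sum_Ico_succ_bot (by omega), sum_eq_sum_Ico_succ_bot (by omega)]
  simp only [zero_add, Nat.reduceAdd, add_assoc]

namespace Real

lemma sin_div_mul_le_sin {A x : ℝ} (hA : 0 < A) (hAπ : A ≤ π) (hx0 : 0 ≤ x) (hxA : x ≤ A) :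
    sin A / A * x ≤ sin x := by
  have h := strictConcaveOn_sin_Icc.concaveOn.2 ⟨le_rfl, pi_pos.le⟩ ⟨hA.le, hAπ⟩
    (sub_nonneg.2 ((div_le_one hA).2 hxA)) (div_nonneg hx0 hA.le) (sub_add_cancel 1 (x / A))
  simp only [smul_eq_mul, mul_zero, sin_zero, zero_add, div_mul_cancel₀ x hA.ne'] at h
  rwa [div_mul_comm]

lemma one_div_sin_le {x : ℝ} (h0 : 0 < x) (hπ : x < π) :
    1 / sin x ≤ π / (2 * x) + π / (2 * (π - x)) := by
  have hsx : 0 < π - x := sub_pos.2 hπ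
  rcases le_total x (π / 2) with h | h
  · have hsin : 2 / π * x ≤ sin x := mul_le_sin h0.le h
    calc 1 / sin x ≤ 1 / (2 / π * x) := one_div_le_one_div_of_le (by positivity) hsin
      _ = π / (2 * x) := by field_simp
      _ ≤ _ := le_add_of_nonneg_right (by positivity)
  · have hsin : 2 / π * (π - x) ≤ sin x := sin_pi_sub x ▸ mul_le_sin hsx.le (by linarith)
    calc 1 / sin x ≤ 1 / (2 / π * (π - x)) := one_div_le_one_div_of_le (by positivity) hsin
      _ = π / (2 * (π - x)) := by field_simp
      _ ≤ _ := le_add_of_nonneg_left (by positivity)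

lemma one_div_le_log_sub_log {x : ℝ} (hx : 1 < x) : 1 / x ≤ (log (x + 1) - log (x - 1)) / 2 := by
  have hx0 : 0 < x := by linarith
  have hu : |1 / x| < 1 := by rw [abs_of_pos (by positivity)]; exact (div_lt_one hx0).2 hx
  have h := sum_le_hasSum {0} (fun k _ => by positivity) (hasSum_log_sub_log_of_abs_lt_one hu)
  have hlog : log (1 + 1 / x) - log (1 - 1 / x) = log (x + 1) - log (x - 1) := by
    rw [show 1 + 1 / x = (x + 1) / x by field_simp, show 1 - 1 / x = (x - 1) / x by field_simp,
      log_div (by linarith) hx0.ne', log_div (by linarith) hx0.ne']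
    ring
  simp only [sum_singleton, CharP.cast_eq_zero, mul_zero, zero_add, div_one, mul_one,
    pow_one] at h
  linarith

lemma five_div_three_add_log_le_two_mul_log {x : ℝ} (hx : 3 ≤ x) :
    5 / 3 + 2 / (3 * √3) + (log (2 * x - 4) + log (2 * x - 3) - log 2 - log 3) / 2
      ≤ 2 * log x := by
  have hsqrt : (1.71 : ℝ) ≤ √3 := by
    rw [le_sqrt (by norm_num) (by norm_num)]; norm_num
  have hfrac : 2 / (3 * √3) ≤ 2 / (3 * 1.71) := by gcongr
  have hlog2 := log_two_gt_d9
  have hpoly : 64 * ((2 * x - 4) * (2 * x - 3)) ≤ 6 * x ^ 4 := by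
    nlinarith [mul_nonneg (sub_nonneg.2 hx) (sub_nonneg.2 hx), sq_nonneg (x ^ 2 - 16)]
  have hlog : log (2 ^ 6 * ((2 * x - 4) * (2 * x - 3))) ≤ log (2 * 3 * x ^ 4) :=
    log_le_log (by nlinarith) (by linarith)
  rw [log_mul (by norm_num) (by nlinarith), log_mul (by linarith) (by linarith), log_pow,
    log_mul (by positivity) (by positivity), log_mul (by norm_num) (by norm_num),
    log_pow] at hlog
  push_cast at hlog
  norm_num at hfrac
  linarith

end Real

lemma sum_Ico_one_div_le_log {n : ℕ} (hn : 3 ≤ n) :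
    ∑ j ∈ Ico 2 (n - 1), (1 / (2 * (j : ℝ) - 1) + 1 / (2 * ((n : ℝ) - j)))
      ≤ (Real.log (2 * n - 4) + Real.log (2 * n - 3) - Real.log 2 - Real.log 3) / 2 := by
  set f : ℕ → ℝ := fun j => (Real.log (2 * j - 2) - Real.log (2 * ((n : ℝ) - j) + 1)) / 2
  have hstep : ∀ j ∈ Ico 2 (n - 1),
      1 / (2 * (j : ℝ) - 1) + 1 / (2 * ((n : ℝ) - j)) ≤ f (j + 1) - f j := by
    intro j hj
    obtain ⟨hj2, hjn⟩ := mem_Ico.mp hj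
    have hj2' : (2 : ℝ) ≤ j := by exact_mod_cast hj2
    have hjn' : (j : ℝ) + 2 ≤ n := by exact_mod_cast (by omega : j + 2 ≤ n)
    have h1 := Real.one_div_le_log_sub_log (x := 2 * (j : ℝ) - 1) (by linarith)
    have h2 := Real.one_div_le_log_sub_log (x := 2 * ((n : ℝ) - j)) (by linarith)
    simp only [f]
    push_cast
    ring_nf at h1 h2 ⊢
    linarith
  calc _ ≤ ∑ j ∈ Ico 2 (n - 1), (f (j + 1) - f j) := sum_le_sum hstep
    _ = f (n - 1) - f 2 := sum_Ico_sub f (by omega)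
    _ = _ := by
        simp only [f]
        rw [Nat.cast_sub (by omega : 1 ≤ n)]
        ring_nf

open Complex in
def dirichletNorm (n : ℕ) (φ : ℝ) : ℝ :=
  ‖∑ j ∈ range n, exp (φ * I) ^ j‖

namespace dirichletNorm

open Complex

lemma le_natCast (n : ℕ) (φ : ℝ) : dirichletNorm n φ ≤ n :=
  (norm_sum_le _ _).trans (by simp [norm_pow, norm_exp_ofReal_mul_I])

lemma periodic (n : ℕ) : Function.Periodic (dirichletNorm n) (2 * Real.pi) := by
  intro φ
  simp only [dirichletNorm, ofReal_add, add_mul, exp_add, ofReal_mul, ofReal_ofNat,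
    exp_two_pi_mul_I, mul_one]

lemma neg (n : ℕ) (φ : ℝ) : dirichletNorm n (-φ) = dirichletNorm n φ := by
  rw [dirichletNorm, dirichletNorm, ← norm_conj, map_sum]
  congr 2 with j
  rw [map_pow, ← exp_conj, map_mul, conj_ofReal, conj_I, ofReal_neg, neg_mul, mul_neg, neg_neg]

lemma mul_abs_sin_le_one (n : ℕ) (x : ℝ) : dirichletNorm n (2 * x) * |Real.sin x| ≤ 1 := by
  set w := exp ((2 * x : ℝ) * I) with hw_def
  have hw : ‖w - 1‖ = 2 * |Real.sin x| := by
    rw [hw_def, mul_comm, Complex.norm_exp_I_mul_ofReal_sub_one]; simp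
  have hwn : ‖w ^ n - 1‖ ≤ 2 := by
    refine (norm_sub_le _ _).trans ?_
    rw [norm_pow, hw_def, norm_exp_ofReal_mul_I]
    norm_num
  have hgeom := congrArg norm (geom_sum_mul w n)
  rw [norm_mul, hw] at hgeom
  unfold dirichletNorm
  linarith

lemma le_one_div_of_le_sin {x τ : ℝ} (hτ : 0 < τ) (h : τ ≤ Real.sin x) (n : ℕ) :
    dirichletNorm n (2 * x) ≤ 1 / τ := by
  rw [le_div_iff₀ hτ]
  calc dirichletNorm n (2 * x) * τ ≤ dirichletNorm n (2 * x) * |Real.sin x| := by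
        gcongr
        · exact norm_nonneg _
        · exact h.trans (le_abs_self _)
    _ ≤ 1 := mul_abs_sin_le_one n x

lemma eq_of_eq_sub_two_pi (n : ℕ) {a b : ℝ} (h : a = b - 2 * Real.pi) :
    dirichletNorm n a = dirichletNorm n b :=
  h ▸ (periodic n).sub_eq b

end dirichletNorm

/-- `n` times the Lebesgue function of interpolation at the `n`-th roots of unity. -/
def lebesgueFun (n : ℕ) (θ : ℝ) : ℝ :=
  ∑ k ∈ range n, dirichletNorm n (θ - 2 * Real.pi * k / n)

namespace lebesgueFun

variable {n : ℕ}

lemma periodic (hn : n ≠ 0) : Function.Periodic (lebesgueFun n) (2 * Real.pi / n) := by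
  intro θ
  have hn' : (n : ℝ) ≠ 0 := Nat.cast_ne_zero.mpr hn
  rw [lebesgueFun, lebesgueFun, ← Finset.sum_range_succ_eq_of_eq]
  · congr 1 with k
    push_cast
    ring_nf
  · apply dirichletNorm.eq_of_eq_sub_two_pi
    field_simp
    ring

lemma neg (hn : n ≠ 0) (θ : ℝ) : lebesgueFun n (-θ) = lebesgueFun n θ := by
  have hn' : (n : ℝ) ≠ 0 := Nat.cast_ne_zero.mpr hn
  calc lebesgueFun n (-θ) = ∑ k ∈ range n, dirichletNorm n (θ + 2 * Real.pi * k / n) := by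
        refine sum_congr rfl fun k _ => ?_
        rw [← dirichletNorm.neg]
        ring_nf
    _ = ∑ k ∈ range n, dirichletNorm n (θ - 2 * Real.pi * ↑(k + 1) / n) := by
        rw [← sum_range_reflect]
        refine sum_congr rfl fun k hk => ?_
        have hk : 1 + k ≤ n := by rw [add_comm]; exact mem_range.mp hk
        refine (dirichletNorm.eq_of_eq_sub_two_pi n ?_).symm
        rw [Nat.sub_sub, Nat.cast_sub hk]
        field_simp
        push_cast
        ring
    _ = lebesgueFun n θ := by
        refine Finset.sum_range_succ_eq_of_eq
          (f := fun k : ℕ => dirichletNorm n (θ - 2 * Real.pi * k / n)) ?_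
        apply dirichletNorm.eq_of_eq_sub_two_pi
        field_simp
        push_cast
        ring

lemma exists_eq_two_mul (hn : n ≠ 0) (θ : ℝ) :
    ∃ β, 0 ≤ β ∧ β ≤ Real.pi / (2 * n) ∧ lebesgueFun n θ = lebesgueFun n (2 * β) := by
  have hp : 0 < 2 * Real.pi / n := by positivity
  obtain ⟨y, ⟨hy0, hyp⟩, hy⟩ := (periodic hn).exists_mem_Ico₀ hp θ
  have hquarter : 2 * Real.pi / n / 4 = Real.pi / (2 * n) := by field_simp; ring
  rcases le_total y (2 * Real.pi / n / 2) with h | h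
  · exact ⟨y / 2, by linarith, by linarith, by rw [hy]; ring_nf⟩
  · refine ⟨(2 * Real.pi / n - y) / 2, by linarith, by linarith, ?_⟩
    rw [hy, mul_div_cancel₀ _ two_ne_zero, sub_eq_neg_add, (periodic hn) (-y), neg hn]

end lebesgueFun

section Nodes

open Real

variable {n : ℕ} {β : ℝ}

lemma three_div_le_sin_pi_div_sub (hn : 3 ≤ n) (hβ0 : 0 ≤ β) (hβ : β ≤ π / (2 * n)) :
    3 / (2 * n) ≤ sin (π / n - β) := by
  have hn' : (3 : ℝ) ≤ n := by exact_mod_cast hn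
  have hL : π / (2 * n) ≤ π / 6 := by gcongr; linarith
  calc 3 / (2 * n) = sin (π / 6) / (π / 6) * (π / (2 * n)) := by
        rw [sin_pi_div_six]; field_simp; ring
    _ ≤ sin (π / (2 * n)) := sin_div_mul_le_sin (by positivity) (by linarith [pi_pos])
        (by positivity) hL
    _ ≤ sin (π / n - β) := by
        apply sin_le_sin_of_le_of_le_pi_div_two (by linarith [pi_pos]) _ _
        · have : π / n ≤ π / 2 := by gcongr; linarith
          linarith
        · have : π / n = 2 * (π / (2 * n)) := by field_simp
          linarith

lemma three_mul_sqrt_three_div_le_sin_pi_sub (hn : 3 ≤ n) (hβ0 : 0 ≤ β) (hβ : β ≤ π / (2 * n)) :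
    3 * √3 / (2 * n) ≤ sin (π - π / n - β) := by
  have hn' : (3 : ℝ) ≤ n := by exact_mod_cast hn
  have hL : π / n ≤ π / 3 := by gcongr
  calc 3 * √3 / (2 * n) = sin (π / 3) / (π / 3) * (π / n) := by
        rw [sin_pi_div_three]; field_simp
    _ ≤ sin (π / n) := sin_div_mul_le_sin (by positivity) (by linarith [pi_pos])
        (by positivity) hL
    _ ≤ sin (π / n + β) := by
        have : 0 ≤ π / n := by positivity
        apply sin_le_sin_of_le_of_le_pi_div_two (by linarith [pi_pos]) _ (by linarith)
        have : π / (2 * n) ≤ π / 6 := by gcongr; linarith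
        linarith
    _ = sin (π - π / n - β) := by rw [← sin_pi_sub, sub_sub]

lemma dirichletNorm_two_mul_pi_mul_div_sub_le {j : ℕ} (hj : 1 ≤ j) (hjn : j < n) (hβ0 : 0 ≤ β)
    (hβ : β ≤ π / (2 * n)) :
    dirichletNorm n (2 * (π * j / n - β)) ≤ n / (2 * j - 1) + n / (2 * (n - j)) := by
  have hj' : (1 : ℝ) ≤ j := by exact_mod_cast hj
  have hjn' : (j : ℝ) + 1 ≤ n := by exact_mod_cast hjn
  have hn0 : (0 : ℝ) < n := by linarith
  have hlow : π * (2 * j - 1) / (2 * n) ≤ π * j / n - β := by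
    have : π * (2 * j - 1) / (2 * n) = π * j / n - π / (2 * n) := by field_simp
    linarith
  have hlow0 : 0 < π * (2 * j - 1) / (2 * n) := by
    have : (0 : ℝ) < 2 * j - 1 := by linarith
    positivity
  have hup : π * (n - j) / n ≤ π - (π * j / n - β) := by
    have : π * (n - j) / n = π - π * j / n := by field_simp
    linarith
  have hup0 : 0 < π * (n - j) / n := by
    have : (0 : ℝ) < n - j := by linarith
    positivity
  have hsin := sin_pos_of_pos_of_lt_pi (x := π * j / n - β) (by linarith) (by linarith)
  calc dirichletNorm n (2 * (π * j / n - β)) ≤ 1 / sin (π * j / n - β) :=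
        dirichletNorm.le_one_div_of_le_sin hsin le_rfl n
    _ ≤ π / (2 * (π * j / n - β)) + π / (2 * (π - (π * j / n - β))) :=
        one_div_sin_le (by linarith) (by linarith)
    _ ≤ π / (2 * (π * (2 * j - 1) / (2 * n))) + π / (2 * (π * (n - j) / n)) := by
        gcongr
    _ = n / (2 * j - 1) + n / (2 * (n - j)) := by
        have : (2 : ℝ) * j - 1 ≠ 0 := by linarith
        have : (n : ℝ) - j ≠ 0 := by linarith
        field_simp

end Nodes

namespace lebesgueFun

open Real

variable {n : ℕ}

lemma two_mul_le (hn : 3 ≤ n) {β : ℝ} (hβ0 : 0 ≤ β) (hβ : β ≤ π / (2 * n)) :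
    lebesgueFun n (2 * β) ≤ n * (5 / 3 + 2 / (3 * √3) +
      (log (2 * n - 4) + log (2 * n - 3) - log 2 - log 3) / 2) := by
  have hnode : ∀ k : ℕ, dirichletNorm n (2 * β - 2 * π * k / n)
      = dirichletNorm n (2 * (π * k / n - β)) := fun k => by
    rw [← dirichletNorm.neg]; ring_nf
  have h0 := dirichletNorm.le_natCast n (2 * β - 2 * π * (0 : ℕ) / n)
  have h1 : dirichletNorm n (2 * β - 2 * π * (1 : ℕ) / n) ≤ n * (2 / 3) := by
    have := dirichletNorm.le_one_div_of_le_sin (by positivity)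
      (three_div_le_sin_pi_div_sub hn hβ0 hβ) n
    rw [hnode, Nat.cast_one]
    convert this using 2 <;> field_simp
  have hlast : dirichletNorm n (2 * β - 2 * π * (n - 1 : ℕ) / n) ≤ n * (2 / (3 * √3)) := by
    have := dirichletNorm.le_one_div_of_le_sin (by positivity)
      (three_mul_sqrt_three_div_le_sin_pi_sub hn hβ0 hβ) n
    rw [hnode, Nat.cast_sub (by omega), Nat.cast_one]
    convert this using 2 <;> field_simp
  have hmid : ∑ j ∈ Ico 2 (n - 1), dirichletNorm n (2 * β - 2 * π * j / n)
      ≤ n * ∑ j ∈ Ico 2 (n - 1), (1 / (2 * (j : ℝ) - 1) + 1 / (2 * ((n : ℝ) - j))) := by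
    rw [mul_sum]
    refine sum_le_sum fun j hj => ?_
    obtain ⟨hj2, hjn⟩ := mem_Ico.mp hj
    rw [hnode, mul_add, mul_one_div, mul_one_div]
    exact dirichletNorm_two_mul_pi_mul_div_sub_le (by omega) (by omega) hβ0 hβ
  have hlog := mul_le_mul_of_nonneg_left (sum_Ico_one_div_le_log hn) (Nat.cast_nonneg n)
  rw [lebesgueFun, Finset.sum_range_eq_add_sum_Ico_add _ hn]
  push_cast at h0
  linarith

lemma le_two_mul_log (hn : 3 ≤ n) (θ : ℝ) : lebesgueFun n θ ≤ 2 * n * log n := by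
  obtain ⟨β, hβ0, hβ, hθ⟩ := exists_eq_two_mul (n := n) (by omega) θ
  calc lebesgueFun n θ = lebesgueFun n (2 * β) := hθ
    _ ≤ n * (5 / 3 + 2 / (3 * √3) +
          (log (2 * n - 4) + log (2 * n - 3) - log 2 - log 3) / 2) := two_mul_le hn hβ0 hβ
    _ ≤ n * (2 * log n) := by
        gcongr
        exact five_div_three_add_log_le_two_mul_log (by exact_mod_cast hn)
    _ = 2 * n * log n := by ring

end lebesgueFun

section Interpolation

variable {K : Type*} [Field K] {n : ℕ}

lemma IsPrimitiveRoot.sum_range_pow_div_pow {ζ : K} (hζ : IsPrimitiveRoot ζ n) {i j : ℕ}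
    (hi : i < n) (hj : j < n) :
    ∑ k ∈ range n, (ζ ^ i / ζ ^ j) ^ k = if i = j then (n : K) else 0 := by
  have hζ0 : ζ ^ j ≠ 0 := pow_ne_zero _ (hζ.ne_zero (by omega))
  split_ifs with hij
  · simp [hij, div_self hζ0]
  have hne : ζ ^ i / ζ ^ j ≠ 1 := fun h => hij (hζ.pow_inj hi hj ((div_eq_one_iff_eq hζ0).mp h))
  have hpow : (ζ ^ i / ζ ^ j) ^ n = 1 := by
    rw [div_pow, ← pow_mul, ← pow_mul, pow_mul', pow_mul', hζ.pow_eq_one, one_pow, one_pow,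
      div_one]
  rw [geom_sum_eq hne, hpow, sub_self, zero_div]

theorem IsPrimitiveRoot.natCast_mul_eval_eq_sum {ζ : K} (hζ : IsPrimitiveRoot ζ n) {A : K[X]}
    (hA : A.natDegree < n) (z : K) :
    n * A.eval z = ∑ k ∈ range n, A.eval (ζ ^ k) * ∑ j ∈ range n, (z / ζ ^ k) ^ j := by
  symm
  calc ∑ k ∈ range n, A.eval (ζ ^ k) * ∑ j ∈ range n, (z / ζ ^ k) ^ j
      = ∑ k ∈ range n, ∑ i ∈ range n, ∑ j ∈ range n,
          A.coeff i * z ^ j * (ζ ^ i / ζ ^ j) ^ k := by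
        refine sum_congr rfl fun k _ => ?_
        rw [eval_eq_sum_range' hA, sum_mul_sum]
        refine sum_congr rfl fun i _ => sum_congr rfl fun j _ => ?_
        rw [div_pow, div_pow, ← pow_mul, ← pow_mul, ← pow_mul, ← pow_mul, mul_comm k i,
          mul_comm k j]
        ring
    _ = ∑ i ∈ range n, ∑ j ∈ range n,
          A.coeff i * z ^ j * ∑ k ∈ range n, (ζ ^ i / ζ ^ j) ^ k := by
        rw [sum_comm]
        refine sum_congr rfl fun i _ => ?_
        rw [sum_comm]
        simp only [mul_sum]
    _ = ∑ i ∈ range n, A.coeff i * z ^ i * n := by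
        refine sum_congr rfl fun i hi => ?_
        calc ∑ j ∈ range n, A.coeff i * z ^ j * ∑ k ∈ range n, (ζ ^ i / ζ ^ j) ^ k
            = ∑ j ∈ range n, if i = j then A.coeff i * z ^ j * n else 0 :=
              sum_congr rfl fun j hj => by
                rw [hζ.sum_range_pow_div_pow (mem_range.mp hi) (mem_range.mp hj), mul_ite,
                  mul_zero]
          _ = A.coeff i * z ^ i * n := by rw [sum_ite_eq, if_pos hi]
    _ = n * A.eval z := by
        rw [eval_eq_sum_range' hA, mul_sum]
        exact sum_congr rfl fun i _ => by ring

end Interpolation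

lemma exp_mul_I_div_zetaC_pow (n k : ℕ) (θ : ℝ) :
    Complex.exp (θ * Complex.I) / zetaC n ^ k
      = Complex.exp ((θ - 2 * Real.pi * k / n : ℝ) * Complex.I) := by
  rw [zetaC, ← Complex.exp_nat_mul, ← Complex.exp_sub]
  push_cast
  ring_nf

theorem natCast_mul_norm_eval_le {n : ℕ} {A : Polynomial ℂ} (hA : A.natDegree < n) {M : ℝ}
    (hM : ∀ k < n, ‖A.eval (zetaC n ^ k)‖ ≤ M) (θ : ℝ) :
    n * ‖A.eval (Complex.exp (θ * Complex.I))‖ ≤ M * lebesgueFun n θ := by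
  have hζ : IsPrimitiveRoot (zetaC n) n := Complex.isPrimitiveRoot_exp n (by omega)
  calc (n : ℝ) * ‖A.eval (Complex.exp (θ * Complex.I))‖
      = ‖∑ k ∈ range n, A.eval (zetaC n ^ k) *
          ∑ j ∈ range n, (Complex.exp (θ * Complex.I) / zetaC n ^ k) ^ j‖ := by
        rw [← hζ.natCast_mul_eval_eq_sum hA, norm_mul, Complex.norm_natCast]
    _ ≤ ∑ k ∈ range n, M * dirichletNorm n (θ - 2 * Real.pi * k / n) := by
        refine (norm_sum_le _ _).trans (sum_le_sum fun k hk => ?_)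
        rw [norm_mul, exp_mul_I_div_zetaC_pow]
        exact mul_le_mul_of_nonneg_right (hM k (mem_range.mp hk)) (norm_nonneg _)
    _ = M * lebesgueFun n θ := by rw [lebesgueFun, mul_sum]

/-- For `n > 2` and `A ∈ ℂ[z]` of degree at most `n-1`,
`max_{|z|=1} |A(z)| ≤ (2 log n) max_{0≤k<n} |A(ζ_n^k)|`. -/
theorem stmt_9 (n : ℕ) (hn : 2 < n) (A : Polynomial ℂ) (hdeg : A.natDegree ≤ n - 1) :
    ∀ z : ℂ, ‖z‖ = 1 →
      ‖A.eval z‖ ≤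
        (2 * Real.log n) *
          (Finset.range n).sup' (Finset.nonempty_range_iff.mpr (by omega))
            (fun k => ‖A.eval (zetaC n ^ k)‖) := by
  intro z hz
  set M := (Finset.range n).sup' (Finset.nonempty_range_iff.mpr (by omega))
    (fun k => ‖A.eval (zetaC n ^ k)‖)
  have hM : ∀ k < n, ‖A.eval (zetaC n ^ k)‖ ≤ M := fun k hk =>
    le_sup' (fun k => ‖A.eval (zetaC n ^ k)‖) (mem_range.mpr hk)
  have hM0 : 0 ≤ M := (norm_nonneg _).trans (hM 0 (by omega))
  have hz : Complex.exp (z.arg * Complex.I) = z := by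
    simpa [hz] using Complex.norm_mul_exp_arg_mul_I z
  have hn0 : (0 : ℝ) < n := by positivity
  refine le_of_mul_le_mul_left ?_ hn0
  calc n * ‖A.eval z‖ ≤ M * lebesgueFun n z.arg := by
        simpa only [hz] using natCast_mul_norm_eval_le (by omega) hM z.arg
    _ ≤ M * (2 * n * Real.log n) := by gcongr; exact lebesgueFun.le_two_mul_log (by omega) z.arg
    _ = n * (2 * Real.log n * M) := by ring
end
end

section
/- Let n be a positive odd square-free integer. Then for every integer u, ∑_{j=0}^{n−1} (j|n)((j+u)|n) = μ(n/gcd(u,n)) · φ(gcd(u,n)), where (·|n) is the Jacobi symbol, μ is the Möbius function, and φ is Euler's totient function. -/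
noncomputable section

open Polynomial Filter

/-!
Write `S_n(u) = ∑_{j<n} (j|n)((j+u)|n)`. Both `S_n(u)` and `μ(n/(u,n)) φ((u,n))` are multiplicative
in `n`: for `S` this is the Chinese remainder theorem together with `(a|mk) = (a|m)(a|k)`. For an odd
prime `p`, `(·|p)` is the quadratic character `χ` of `𝔽_p`; if `p ∣ u` the sum counts the units,
giving `p - 1 = φ(p)`, and otherwise the substitution `x = -u t` turns it into the Jacobi sum
`χ(-1) J(χ, χ⁻¹) = -χ(-1)² = -1`.
-/

section

open Finset
open scoped NumberTheorySymbols ArithmeticFunction.Moebius Nat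

namespace MulChar.IsQuadratic

variable {R : Type*} [CommRing R]

lemma apply_sq_eq_one {M : Type*} [CommMonoid M] {ψ : MulChar M R} (hψ : ψ.IsQuadratic) {a : M}
    (ha : IsUnit a) : ψ a ^ 2 = 1 := by
  rw [← MulChar.pow_apply' ψ two_ne_zero, hψ.sq_eq_one, MulChar.one_apply ha]

variable {F : Type*} [Field F] [Fintype F] {χ : MulChar F R}

lemma sum_mul_self (hχ : χ.IsQuadratic) : ∑ x, χ x * χ x = Fintype.card F - 1 := by
  classical
  simp_rw [← sq, ← MulChar.pow_apply' χ two_ne_zero, hχ.sq_eq_one, MulChar.sum_one_eq_card_units,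
    Fintype.card_units, Nat.cast_sub Fintype.card_pos, Nat.cast_one]

lemma sum_mul_apply_add [IsDomain R] (hχ : χ.IsQuadratic) (hχ1 : χ ≠ 1) {a : F} (ha : a ≠ 0) :
    ∑ x, χ x * χ (x + a) = -1 := by
  have hterm (t : F) : χ (-a * t) * χ (-a * t + a) = χ (-1) * χ a ^ 2 * (χ t * χ (1 - t)) := by
    rw [show -a * t + a = a * (1 - t) by ring, show -a * t = -1 * a * t by ring, map_mul,
      map_mul, map_mul]
    ring
  calc ∑ x, χ x * χ (x + a)
      = ∑ t, χ (-a * t) * χ (-a * t + a) :=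
        (Fintype.sum_equiv (Equiv.mulLeft₀ (-a) (neg_ne_zero.mpr ha)) _ _ fun _ => rfl).symm
    _ = χ (-1) * jacobiSum χ χ⁻¹ := by
        simp_rw [hterm, hχ.apply_sq_eq_one ha.isUnit, mul_one, ← mul_sum, hχ.inv, jacobiSum]
    _ = -1 := by
        rw [jacobiSum_nontrivial_inv hχ1, mul_neg, ← sq,
          hχ.apply_sq_eq_one isUnit_one.neg]

end MulChar.IsQuadratic

lemma ZMod.sum_val_eq_sum_range {M : Type*} [AddCommMonoid M] (n : ℕ) [NeZero n] (f : ℕ → M) :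
    ∑ x : ZMod n, f x.val = ∑ j ∈ range n, f j := by
  obtain ⟨k, rfl⟩ := Nat.exists_eq_succ_of_ne_zero (NeZero.ne n)
  exact Fin.sum_univ_eq_sum_range f (k + 1)

lemma Function.Periodic.sum_range_mul_eq_mul_of_coprime {R : Type*} [CommSemiring R] {m k : ℕ}
    (hmk : m.Coprime k) {f g : ℕ → R} (hf : Function.Periodic f m) (hg : Function.Periodic g k) :
    ∑ j ∈ range (m * k), f j * g j = (∑ j ∈ range m, f j) * ∑ j ∈ range k, g j := by
  rcases eq_or_ne m 0 with rfl | hm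
  · simp
  rcases eq_or_ne k 0 with rfl | hk
  · simp
  have : NeZero m := ⟨hm⟩
  have : NeZero k := ⟨hk⟩
  have : NeZero (m * k) := ⟨mul_ne_zero hm hk⟩
  have hcast {d : ℕ} [NeZero d] (x : ZMod (m * k)) : (ZMod.cast x : ZMod d).val = x.val % d := by
    rw [ZMod.cast_eq_val, ZMod.val_natCast]
  rw [← ZMod.sum_val_eq_sum_range, ← ZMod.sum_val_eq_sum_range, ← ZMod.sum_val_eq_sum_range,
    sum_mul_sum, ← Fintype.sum_prod_type']
  refine Fintype.sum_equiv (ZMod.chineseRemainder hmk) _ _ fun x => ?_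
  -- `ZMod.chineseRemainder` is, by construction, the cast into `ZMod m × ZMod k`.
  change _ = f (ZMod.cast x : ZMod m × ZMod k).1.val * g (ZMod.cast x : ZMod m × ZMod k).2.val
  rw [Prod.fst_zmod_cast, Prod.snd_zmod_cast, hcast, hcast, hf.map_mod_nat, hg.map_mod_nat]

def jacobiAutocorrelation (n : ℕ) (u : ℤ) : ℤ :=
  ∑ j ∈ range n, J(j | n) * J(j + u | n)

lemma jacobiSym_add_natCast_self (a : ℤ) (n : ℕ) : J(a + n | n) = J(a | n) :=
  jacobiSym.mod_left' (Int.add_emod_right a n)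

lemma jacobiAutocorrelation_mul {m k : ℕ} [NeZero m] [NeZero k] (h : m.Coprime k) (u : ℤ) :
    jacobiAutocorrelation (m * k) u = jacobiAutocorrelation m u * jacobiAutocorrelation k u := by
  have hper (n : ℕ) : Function.Periodic (fun j : ℕ => J(j | n) * J(j + u | n)) n := by
    intro j
    simp only [Nat.cast_add]
    rw [jacobiSym_add_natCast_self, add_right_comm, jacobiSym_add_natCast_self]
  rw [jacobiAutocorrelation, jacobiAutocorrelation, jacobiAutocorrelation,
    ← (hper m).sum_range_mul_eq_mul_of_coprime h (hper k)]
  refine sum_congr rfl fun j _ => ?_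
  rw [jacobiSym.mul_right, jacobiSym.mul_right]
  ring

lemma jacobiAutocorrelation_prime {p : ℕ} (hp : p.Prime) (hp2 : p ≠ 2) (u : ℤ) :
    jacobiAutocorrelation p u = if (p : ℤ) ∣ u then (p : ℤ) - 1 else -1 := by
  have := Fact.mk hp
  set χ := quadraticChar (ZMod p)
  have hJ (a : ℤ) : J(a | p) = χ a := (jacobiSym.legendreSym.to_jacobiSym p a).symm
  have hu : (u : ZMod p) = 0 ↔ (p : ℤ) ∣ u := ZMod.intCast_zmod_eq_zero_iff_dvd u p
  have hsum : jacobiAutocorrelation p u = ∑ x : ZMod p, χ x * χ (x + u) := by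
    simp_rw [jacobiAutocorrelation, hJ, ← ZMod.sum_val_eq_sum_range p, Int.cast_add,
      Int.cast_natCast, ZMod.natCast_zmod_val]
  rw [hsum]
  split_ifs with h
  · simp_rw [hu.mpr h, add_zero]
    rw [(quadraticChar_isQuadratic _).sum_mul_self, ZMod.card]
  · exact (quadraticChar_isQuadratic _).sum_mul_apply_add
      (quadraticChar_ne_one (by rwa [ZMod.ringChar_zmod_n])) (mt hu.mp h)

lemma moebius_div_gcd_mul_totient_gcd_mul (u : ℤ) {m k : ℕ} (h : m.Coprime k) :
    μ (m * k / Int.gcd u ↑(m * k)) * (φ (Int.gcd u ↑(m * k)) : ℤ) =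
      μ (m / Int.gcd u m) * (φ (Int.gcd u m) : ℤ) * (μ (k / Int.gcd u k) * (φ (Int.gcd u k) : ℤ)) := by
  have hm : Int.gcd u m ∣ m := Nat.gcd_dvd_right _ _
  have hk : Int.gcd u k ∣ k := Nat.gcd_dvd_right _ _
  have hgcd : Int.gcd u ↑(m * k) = Int.gcd u m * Int.gcd u k := Nat.Coprime.gcd_mul u.natAbs h
  rw [hgcd, ← Nat.div_mul_div_comm hm hk,
    ArithmeticFunction.isMultiplicative_moebius.map_mul_of_coprime
      ((h.coprime_dvd_left (Nat.div_dvd_of_dvd hm)).coprime_dvd_right (Nat.div_dvd_of_dvd hk)),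
    Nat.totient_mul ((h.coprime_dvd_left hm).coprime_dvd_right hk)]
  push_cast
  ring

lemma moebius_div_gcd_mul_totient_gcd_prime {p : ℕ} (hp : p.Prime) (u : ℤ) :
    μ (p / Int.gcd u p) * (φ (Int.gcd u p) : ℤ) = if (p : ℤ) ∣ u then (p : ℤ) - 1 else -1 := by
  split_ifs with h
  · have hgcd : Int.gcd u p = p := Nat.gcd_eq_right (Int.ofNat_dvd_left.mp h)
    rw [hgcd, Nat.div_self hp.pos, Nat.totient_prime hp, Nat.cast_sub hp.one_le]
    simp
  · have hgcd : Int.gcd u p = 1 :=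
      Nat.Coprime.symm ((Nat.Prime.coprime_iff_not_dvd hp).mpr (mt Int.ofNat_dvd_left.mpr h))
    simp [hgcd, ArithmeticFunction.moebius_apply_prime hp]

theorem jacobiAutocorrelation_eq_moebius_mul_totient {n : ℕ} (hodd : Odd n) (hsqf : Squarefree n)
    (u : ℤ) : jacobiAutocorrelation n u = μ (n / Int.gcd u n) * (φ (Int.gcd u n) : ℤ) := by
  induction n using Nat.recOnPosPrimePosCoprime with
  | zero => exact absurd hodd Nat.not_odd_zero
  | one => simp [jacobiAutocorrelation]
  | prime_pow p a hp ha =>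
    obtain ⟨-, rfl⟩ := (Nat.squarefree_pow_iff hp.ne_one ha.ne').mp hsqf
    have hp2 : p ≠ 2 := by
      rintro rfl
      exact Nat.not_even_iff_odd.mpr hodd even_two
    rw [pow_one, jacobiAutocorrelation_prime hp hp2, moebius_div_gcd_mul_totient_gcd_prime hp]
  | coprime a b ha hb hab iha ihb =>
    obtain ⟨hodda, hoddb⟩ := Nat.odd_mul.mp hodd
    have : NeZero a := ⟨by omega⟩
    have : NeZero b := ⟨by omega⟩
    rw [jacobiAutocorrelation_mul hab, moebius_div_gcd_mul_totient_gcd_mul u hab,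
      iha hodda (hsqf.squarefree_of_dvd (dvd_mul_right a b)),
      ihb hoddb (hsqf.squarefree_of_dvd (dvd_mul_left b a))]

end

theorem stmt_11_general (n : ℕ) (hodd : Odd n) (hsqf : Squarefree n) (u : ℤ) :
    ∑ j ∈ Finset.range n, jacobiSym j n * jacobiSym ((j : ℤ) + u) n =
      ArithmeticFunction.moebius (n / Int.gcd u n) * (Nat.totient (Int.gcd u n) : ℤ) :=
  jacobiAutocorrelation_eq_moebius_mul_totient hodd hsqf u

/-- For positive odd square-free `n` and integer `u`,
`∑_{j=0}^{n-1} (j|n)((j+u)|n) = μ(n/gcd(u,n)) φ(gcd(u,n))`. -/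
theorem stmt_11 (n : ℕ) (hn : 0 < n) (hodd : Odd n) (hsqf : Squarefree n) (u : ℤ) :
    ∑ j ∈ Finset.range n, jacobiSym j n * jacobiSym ((j : ℤ) + u) n =
      ArithmeticFunction.moebius (n / Int.gcd u n) * (Nat.totient (Int.gcd u n) : ℤ) :=
  stmt_11_general n hodd hsqf u
end
end

section
/- Let n range over an infinite increasing sequence of odd square-free integers greater than 1, let r be a real number, and let V be drawn uniformly at random from 𝒱_n. Then Pr(‖V_r‖_4^4 < 288 ψ(n)^2 log n) → 1 as n → ∞; that is, the proportion of V ∈ 𝒱_n satisfying ‖V_r‖_4^4 < 288 ψ(n)^2 log n tends to 1. -/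
noncomputable section

open Polynomial Filter

/-!
Let `S = {j < n : gcd(j, n) > 1}`, so that `|S| = ψ(n)`. The polynomials in `𝒱_n` are exactly the
signed sums `∑_{j ∈ S} ±X^j`, and on the unit circle `V_r(z) = ∑_{j ∈ S} ±z^{e(j)}` with
`|z^{e(j)}| = 1`. Khintchine's fourth-moment inequality, proved by adding one sign at a time, bounds
the average of `|V_r(z)|⁴` over all sign choices by `3ψ(n)²` at every point `z`, hence the average
of `‖V_r‖₄⁴` by `3ψ(n)²`. By Markov's inequality the proportion of `V` with
`‖V_r‖₄⁴ ≥ 288 ψ(n)² log n` is at most `1/(96 log n) → 0`.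
-/

open Finset

section Khintchine

variable {α : Type*} [DecidableEq α]

/-- A sign vector on `s` is encoded by the subset `t ⊆ s` of its `+1` entries. -/
def pmOne (t : Finset α) (j : α) : ℂ := if j ∈ t then 1 else -1

lemma pmOne_eq_one_iff {t : Finset α} {j : α} : pmOne t j = 1 ↔ j ∈ t := by
  by_cases h : j ∈ t <;> simp [pmOne, h]; norm_num

def signedSum (a : α → ℂ) (s t : Finset α) : ℂ := ∑ j ∈ s, pmOne t j * a j

lemma signedSum_insert_of_subset {a : α → ℂ} {s t : Finset α} {i : α} (hi : i ∉ s)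
    (ht : t ⊆ s) : signedSum a (insert i s) t = signedSum a s t - a i := by
  rw [signedSum, sum_insert hi, pmOne, if_neg fun h => hi (ht h), signedSum]
  ring

lemma signedSum_insert_insert {a : α → ℂ} {s t : Finset α} {i : α} (hi : i ∉ s) :
    signedSum a (insert i s) (insert i t) = signedSum a s t + a i := by
  have hs : ∀ j ∈ s, pmOne (insert i t) j * a j = pmOne t j * a j := fun j hj => by
    simp [pmOne, mem_insert, show j ≠ i from fun h => hi (h ▸ hj)]
  rw [signedSum, sum_insert hi, sum_congr rfl hs, pmOne, if_pos (mem_insert_self i t), signedSum]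
  ring

lemma sum_powerset_insert_signedSum (f : ℂ → ℝ) (a : α → ℂ) {s : Finset α} {i : α}
    (hi : i ∉ s) :
    ∑ t ∈ (insert i s).powerset, f (signedSum a (insert i s) t) =
      ∑ t ∈ s.powerset, (f (signedSum a s t - a i) + f (signedSum a s t + a i)) := by
  rw [sum_powerset_insert hi, ← sum_add_distrib]
  refine sum_congr rfl fun t ht => ?_
  rw [signedSum_insert_of_subset hi (mem_powerset.mp ht), signedSum_insert_insert hi]

-- `‖y ± c‖² = ‖y‖² + ‖c‖² ± 2 Re (y c̄)`, and `(Re (y c̄))² ≤ ‖y‖² ‖c‖²`.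
lemma norm_sub_pow_four_add_norm_add_pow_four_le (y c : ℂ) :
    ‖y - c‖ ^ 4 + ‖y + c‖ ^ 4 ≤ 2 * ‖y‖ ^ 4 + 12 * ‖c‖ ^ 2 * ‖y‖ ^ 2 + 2 * ‖c‖ ^ 4 := by
  have h2 : ∀ z : ℂ, ‖z‖ ^ 2 = z.re ^ 2 + z.im ^ 2 := fun z => by
    rw [Complex.sq_norm, Complex.normSq_apply]; ring
  have h4 : ∀ z : ℂ, ‖z‖ ^ 4 = (z.re ^ 2 + z.im ^ 2) ^ 2 := fun z => by
    rw [← h2]; ring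
  simp only [h2, h4, Complex.sub_re, Complex.sub_im, Complex.add_re, Complex.add_im]
  nlinarith [sq_nonneg (y.re * c.im - y.im * c.re)]

lemma sum_powerset_norm_sq_signedSum (a : α → ℂ) (s : Finset α) :
    ∑ t ∈ s.powerset, ‖signedSum a s t‖ ^ 2 = 2 ^ #s * ∑ j ∈ s, ‖a j‖ ^ 2 := by
  induction s using Finset.induction_on with
  | empty => simp [signedSum]
  | @insert i s hi ih =>
    have hpar : ∀ y : ℂ, ‖y - a i‖ ^ 2 + ‖y + a i‖ ^ 2 = 2 * ‖y‖ ^ 2 + 2 * ‖a i‖ ^ 2 :=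
      fun y => by linarith [parallelogram_law_with_norm ℝ y (a i)]
    rw [sum_powerset_insert_signedSum (‖·‖ ^ 2) a hi]
    simp only [hpar, sum_add_distrib, ← mul_sum, ih, sum_const, card_powerset, nsmul_eq_mul,
      card_insert_of_notMem hi, sum_insert hi]
    push_cast
    ring

lemma sum_powerset_norm_pow_four_signedSum_le (a : α → ℂ) (s : Finset α) :
    ∑ t ∈ s.powerset, ‖signedSum a s t‖ ^ 4 ≤ 3 * 2 ^ #s * (∑ j ∈ s, ‖a j‖ ^ 2) ^ 2 := by
  induction s using Finset.induction_on with
  | empty => simp [signedSum]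
  | @insert i s hi ih =>
    set Q := ∑ j ∈ s, ‖a j‖ ^ 2
    set C := ‖a i‖ ^ 2
    have hC : 0 ≤ C := by positivity
    have h2 : (0 : ℝ) ≤ 2 ^ #s := by positivity
    rw [sum_powerset_insert_signedSum (‖·‖ ^ 4) a hi, card_insert_of_notMem hi, sum_insert hi]
    calc ∑ t ∈ s.powerset, (‖signedSum a s t - a i‖ ^ 4 + ‖signedSum a s t + a i‖ ^ 4)
        ≤ ∑ t ∈ s.powerset, (2 * ‖signedSum a s t‖ ^ 4 + 12 * C * ‖signedSum a s t‖ ^ 2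
            + 2 * ‖a i‖ ^ 4) :=
          sum_le_sum fun t _ => norm_sub_pow_four_add_norm_add_pow_four_le _ _
      _ = 2 * ∑ t ∈ s.powerset, ‖signedSum a s t‖ ^ 4 + 12 * C * (2 ^ #s * Q)
            + 2 ^ #s * (2 * C ^ 2) := by
          rw [← sum_powerset_norm_sq_signedSum, sum_add_distrib, sum_add_distrib, ← mul_sum,
            ← mul_sum, sum_const, card_powerset, nsmul_eq_mul]
          push_cast
          ring
      _ ≤ 3 * 2 ^ (#s + 1) * (C + Q) ^ 2 := by
          rw [pow_succ (2 : ℝ)]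
          nlinarith [mul_nonneg (mul_nonneg h2 hC) hC]

end Khintchine

lemma X_pow_modByMonic_X_pow_sub_one {R : Type*} [CommRing R] [Nontrivial R] {n : ℕ}
    (hn : 0 < n) (k : ℕ) : (X ^ k : R[X]) %ₘ (X ^ n - 1) = X ^ (k % n) := by
  have hmonic : (X ^ n - 1 : R[X]).Monic := by simpa using monic_X_pow_sub_C (1 : R) hn.ne'
  have hdvd : (X ^ n - 1 : R[X]) ∣ X ^ k - X ^ (k % n) := by
    have hk : (X ^ k : R[X]) - X ^ (k % n) = X ^ (k % n) * ((X ^ n) ^ (k / n) - 1) := by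
      rw [mul_sub, ← pow_mul, ← pow_add, Nat.mod_add_div, mul_one]
    rw [hk]
    exact dvd_mul_of_dvd_right (by simpa using sub_dvd_pow_sub_pow (X ^ n : R[X]) 1 (k / n)) _
  have hdeg : (X ^ n - 1 : R[X]).degree = n := by simpa using degree_X_pow_sub_C hn (1 : R)
  rw [modByMonic_eq_of_dvd_sub hmonic hdvd, modByMonic_eq_self_iff hmonic, degree_X_pow, hdeg]
  exact_mod_cast Nat.mod_lt k hn

lemma rot_sum_C_mul_X_pow {n : ℕ} (hn : 0 < n) (r : ℝ) (c : ℕ → ℂ) (s : Finset ℕ) :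
    rot n r (∑ j ∈ s, C (c j) * X ^ j) =
      ∑ j ∈ s, C (c j) * X ^ ((((-⌊(n : ℝ) * r⌋) % (n : ℤ)).toNat + j) % n) := by
  have hmonic : (X ^ n - 1 : ℂ[X]).Monic := by simpa using monic_X_pow_sub_C (1 : ℂ) hn.ne'
  rw [rot, ← modByMonic_eq_mod _ hmonic, mul_sum, ← modByMonicHom_apply, map_sum]
  refine sum_congr rfl fun j _ => ?_
  rw [modByMonicHom_apply, mul_left_comm, ← pow_add, ← smul_eq_C_mul, smul_modByMonic,
    X_pow_modByMonic_X_pow_sub_one hn, smul_eq_C_mul]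

lemma lnorm_four_pow (A : ℂ[X]) :
    lnorm 4 A ^ 4 = (2 * Real.pi)⁻¹ * ∫ θ in (0 : ℝ)..(2 * Real.pi),
      ‖A.eval (Complex.exp (Complex.I * θ))‖ ^ (4 : ℕ) := by
  have hrpow : ∀ x : ℝ, x ^ (4 : ℝ) = x ^ (4 : ℕ) := fun x => by
    rw [← Real.rpow_natCast]; norm_num
  have hnonneg : 0 ≤ (2 * Real.pi)⁻¹ * ∫ θ in (0 : ℝ)..(2 * Real.pi),
      ‖A.eval (Complex.exp (Complex.I * θ))‖ ^ (4 : ℕ) :=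
    mul_nonneg (by positivity)
      (intervalIntegral.integral_nonneg (by positivity) fun _ _ => by positivity)
  simp only [lnorm, hrpow]
  rw [← Real.rpow_natCast, ← Real.rpow_mul hnonneg]
  norm_num

lemma sum_lnorm_four_pow_le {ι : Type*} (P : ι → ℂ[X]) (S : Finset ι) (B : ℝ)
    (hB : ∀ z : ℂ, ‖z‖ = 1 → ∑ i ∈ S, ‖(P i).eval z‖ ^ 4 ≤ B) :
    ∑ i ∈ S, lnorm 4 (P i) ^ 4 ≤ B := by
  have hcont : ∀ i, Continuous fun θ : ℝ => ‖(P i).eval (Complex.exp (Complex.I * θ))‖ ^ 4 :=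
    fun i => by fun_prop
  have h2pi : (0 : ℝ) < 2 * Real.pi := by positivity
  calc ∑ i ∈ S, lnorm 4 (P i) ^ 4
      = (2 * Real.pi)⁻¹ * ∫ θ in (0 : ℝ)..(2 * Real.pi),
          ∑ i ∈ S, ‖(P i).eval (Complex.exp (Complex.I * θ))‖ ^ 4 := by
        rw [intervalIntegral.integral_finsetSum fun i _ => (hcont i).intervalIntegrable _ _,
          mul_sum]
        exact sum_congr rfl fun i _ => lnorm_four_pow _
    _ ≤ (2 * Real.pi)⁻¹ * ∫ _ in (0 : ℝ)..(2 * Real.pi), B := by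
        gcongr
        refine intervalIntegral.integral_mono_on h2pi.le
          ((continuous_finsetSum _ fun i _ => hcont i).intervalIntegrable _ _)
          intervalIntegrable_const fun θ _ => hB _ ?_
        rw [Complex.norm_exp]
        simp
    _ = B := by
        rw [intervalIntegral.integral_const, sub_zero, smul_eq_mul, inv_mul_cancel_left₀ h2pi.ne']

def cototientSet (n : ℕ) : Finset ℕ := {j ∈ range n | j.gcd n ≠ 1}

lemma mem_cototientSet {n j : ℕ} : j ∈ cototientSet n ↔ j < n ∧ j.gcd n ≠ 1 := by
  simp [cototientSet]

lemma card_cototientSet (n : ℕ) : (#(cototientSet n) : ℝ) = n - Nat.totient n := by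
  have hset : cototientSet n = {j ∈ range n | ¬ n.Coprime j} :=
    filter_congr fun j _ => by rw [Nat.coprime_comm, Nat.Coprime]
  have h := card_filter_add_card_filter_not (s := range n) (fun j => n.Coprime j)
  rw [← Nat.totient_eq_card_coprime, ← hset, card_range] at h
  rw [eq_sub_iff_add_eq', ← Nat.cast_add, h]

lemma card_cototientSet_pos {n : ℕ} (hn : 1 < n) : 0 < #(cototientSet n) :=
  card_pos.mpr ⟨0, mem_cototientSet.mpr ⟨by omega, by simp; omega⟩⟩

def signedPoly (n : ℕ) (t : Finset ℕ) : ℂ[X] := ∑ j ∈ cototientSet n, C (pmOne t j) * X ^ j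

lemma coeff_signedPoly (n : ℕ) (t : Finset ℕ) (k : ℕ) :
    (signedPoly n t).coeff k = if k ∈ cototientSet n then pmOne t k else 0 := by
  simp [signedPoly, coeff_C_mul, coeff_X_pow]

lemma signedPoly_injOn (n : ℕ) : Set.InjOn (signedPoly n) (cototientSet n).powerset := by
  have hsub : ∀ t₁ ∈ ((cototientSet n).powerset : Set (Finset ℕ)), ∀ t₂,
      signedPoly n t₁ = signedPoly n t₂ → t₁ ⊆ t₂ := fun t₁ ht₁ t₂ h j hj => by
    have hj' : j ∈ cototientSet n := mem_powerset.mp ht₁ hj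
    have := congrArg (coeff · j) h
    simp only [coeff_signedPoly, if_pos hj'] at this
    exact pmOne_eq_one_iff.mp (this ▸ pmOne_eq_one_iff.mpr hj)
  exact fun t₁ ht₁ t₂ ht₂ h => (hsub t₁ ht₁ t₂ h).antisymm (hsub t₂ ht₂ t₁ h.symm)

lemma VSet_eq_image (n : ℕ) :
    VSet n = ((cototientSet n).powerset.image (signedPoly n) : Set ℂ[X]) := by
  ext V
  simp only [coe_image, coe_powerset, Set.mem_image, Set.mem_preimage, Set.mem_powerset_iff,
    coe_subset]
  constructor
  · rintro ⟨hhigh, hlow⟩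
    refine ⟨{j ∈ cototientSet n | V.coeff j = 1}, filter_subset _ _, ?_⟩
    ext k
    rw [coeff_signedPoly]
    split_ifs with hk
    · obtain ⟨hkn, hkg⟩ := mem_cototientSet.mp hk
      obtain ⟨hv, hiff⟩ := hlow k hkn
      rcases hv with h0 | h1 | h2
      · exact absurd (hiff.mp h0) hkg
      · simp [pmOne, hk, h1]
      · simp [pmOne, hk, h2]; norm_num
    · rcases lt_or_ge k n with hkn | hkn
      · exact ((hlow k hkn).2.mpr (by_contra fun hg => hk (mem_cototientSet.mpr ⟨hkn, hg⟩))).symm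
      · exact (hhigh k hkn).symm
  · rintro ⟨t, -, rfl⟩
    refine ⟨fun j hj => ?_, fun j hj => ?_⟩
    · rw [coeff_signedPoly, if_neg fun h => by have := (mem_cototientSet.mp h).1; omega]
    · rw [coeff_signedPoly]
      by_cases hjs : j ∈ cototientSet n
      · have hg := (mem_cototientSet.mp hjs).2
        by_cases hjt : j ∈ t <;> simp [hjs, hjt, hg, pmOne]
      · have hg : j.gcd n = 1 := by_contra fun hg => hjs (mem_cototientSet.mpr ⟨hj, hg⟩)
        simp [hjs, hg]

lemma one_sub_sum_div_le_card_filter_lt_div_card {β : Type*} {S : Finset β} (hS : S.Nonempty)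
    {f : β → ℝ} (hf : ∀ x ∈ S, 0 ≤ f x) {T : ℝ} (hT : 0 < T) :
    1 - (∑ x ∈ S, f x) / (T * #S) ≤ #{x ∈ S | f x < T} / #S := by
  have hS' : (0 : ℝ) < #S := by exact_mod_cast hS.card_pos
  have hsplit : (#{x ∈ S | f x < T} : ℝ) + #{x ∈ S | ¬ f x < T} = #S := by
    exact_mod_cast card_filter_add_card_filter_not _
  have hmarkov : T * #{x ∈ S | ¬ f x < T} ≤ ∑ x ∈ S, f x :=
    calc T * #{x ∈ S | ¬ f x < T}
        ≤ ∑ x ∈ S with ¬ f x < T, f x := by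
          rw [mul_comm, ← nsmul_eq_mul]
          exact card_nsmul_le_sum _ _ _ fun x hx => not_lt.mp (mem_filter.mp hx).2
      _ ≤ ∑ x ∈ S, f x := sum_le_sum_of_subset_of_nonneg (filter_subset _ _) fun x hx _ => hf x hx
  have hbad : (#{x ∈ S | ¬ f x < T} : ℝ) ≤ (∑ x ∈ S, f x) / T := by
    rw [le_div_iff₀ hT]
    linarith
  calc 1 - (∑ x ∈ S, f x) / (T * #S)
      ≤ 1 - #{x ∈ S | ¬ f x < T} / #S := by
        rw [← div_div]
        gcongr
    _ = #{x ∈ S | f x < T} / #S := by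
        rw [eq_div_iff hS'.ne', sub_mul, div_mul_cancel₀ _ hS'.ne']
        linarith

lemma sum_lnorm_four_pow_rot_signedPoly_le {n : ℕ} (hn : 0 < n) (r : ℝ) :
    ∑ t ∈ (cototientSet n).powerset, lnorm 4 (rot n r (signedPoly n t)) ^ 4 ≤
      3 * 2 ^ #(cototientSet n) * (#(cototientSet n) : ℝ) ^ 2 := by
  refine sum_lnorm_four_pow_le _ _ _ fun z hz => ?_
  set e : ℕ → ℕ := fun j => (((-⌊(n : ℝ) * r⌋) % (n : ℤ)).toNat + j) % n
  have heval : ∀ t, (rot n r (signedPoly n t)).eval z = signedSum (z ^ e ·) (cototientSet n) t :=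
    fun t => by simp [signedPoly, rot_sum_C_mul_X_pow hn, eval_finsetSum, signedSum, e]
  have hunit : ∑ j ∈ cototientSet n, ‖z ^ e j‖ ^ 2 = #(cototientSet n) := by simp [hz]
  simp only [heval]
  have hkhintchine := sum_powerset_norm_pow_four_signedSum_le (z ^ e ·) (cototientSet n)
  rwa [hunit] at hkhintchine

lemma one_sub_le_ncard_lnorm_four_pow_rot_lt_div {n : ℕ} (hn : 0 < n) (r : ℝ) {T : ℝ}
    (hT : 0 < T) :
    1 - 3 * (#(cototientSet n) : ℝ) ^ 2 / T ≤
      (Set.ncard {V ∈ VSet n | lnorm 4 (rot n r V) ^ 4 < T} : ℝ) / Set.ncard (VSet n) := by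
  set S := (cototientSet n).powerset.image (signedPoly n)
  have hcardS : (#S : ℝ) = 2 ^ #(cototientSet n) := by
    rw [card_image_of_injOn (signedPoly_injOn n), card_powerset]
    push_cast
    rfl
  have hsum : ∑ V ∈ S, lnorm 4 (rot n r V) ^ 4 ≤ 3 * #S * (#(cototientSet n) : ℝ) ^ 2 := by
    rw [sum_image (signedPoly_injOn n), hcardS]
    exact sum_lnorm_four_pow_rot_signedPoly_le hn r
  have hS : S.Nonempty := (powerset_nonempty _).image _
  have hgood : {V ∈ VSet n | lnorm 4 (rot n r V) ^ 4 < T} =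
      ↑{V ∈ S | lnorm 4 (rot n r V) ^ 4 < T} := by
    rw [VSet_eq_image, coe_filter]
    rfl
  rw [hgood, VSet_eq_image, Set.ncard_coe_finset, Set.ncard_coe_finset]
  refine le_trans ?_ (one_sub_sum_div_le_card_filter_lt_div_card hS (fun _ _ => by positivity) hT)
  have hS' : (0 : ℝ) < #S := by exact_mod_cast hS.card_pos
  gcongr 1 - ?_
  rw [div_le_div_iff₀ (by positivity) hT]
  nlinarith

lemma ncard_lnorm_four_pow_rot_lt_div_le_one (n : ℕ) (r T : ℝ) :
    (Set.ncard {V ∈ VSet n | lnorm 4 (rot n r V) ^ 4 < T} : ℝ) / Set.ncard (VSet n) ≤ 1 := by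
  have hfin : (VSet n).Finite := by
    rw [VSet_eq_image]
    exact finite_toSet _
  exact div_le_one_of_le₀ (by exact_mod_cast Set.ncard_le_ncard (Set.sep_subset _ _) hfin)
    (by positivity)

theorem stmt_16_general (N : ℕ → ℕ) (hmono : StrictMono N)
    (hgt : ∀ k, 1 < N k)
    (r : ℝ) :
    Tendsto (fun k =>
        (Set.ncard {V ∈ VSet (N k) |
            (lnorm 4 (rot (N k) r V)) ^ 4 <
              288 * ((N k : ℝ) - (Nat.totient (N k) : ℝ)) ^ 2 * Real.log (N k)} : ℝ) /
          (Set.ncard (VSet (N k)) : ℝ))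
      atTop (nhds 1) := by
  have hlog : Tendsto (fun k => Real.log (N k)) atTop atTop :=
    Real.tendsto_log_atTop.comp (tendsto_natCast_atTop_atTop.comp hmono.tendsto_atTop)
  have hlower : Tendsto (fun k => 1 - (96 * Real.log (N k))⁻¹) atTop (nhds 1) := by
    simpa using
      tendsto_const_nhds.sub (hlog.const_mul_atTop (by norm_num : (0 : ℝ) < 96)).inv_tendsto_atTop
  refine tendsto_of_tendsto_of_tendsto_of_le_of_le hlower tendsto_const_nhds (fun k => ?_)
    fun k => ncard_lnorm_four_pow_rot_lt_div_le_one _ _ _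
  have hψ : (0 : ℝ) < #(cototientSet (N k)) := by exact_mod_cast card_cototientSet_pos (hgt k)
  have hlogpos : 0 < Real.log (N k) := Real.log_pos (by exact_mod_cast hgt k)
  rw [← card_cototientSet]
  calc 1 - (96 * Real.log (N k))⁻¹
      = 1 - 3 * (#(cototientSet (N k)) : ℝ) ^ 2 /
          (288 * (#(cototientSet (N k)) : ℝ) ^ 2 * Real.log (N k)) := by
        field_simp
        ring
    _ ≤ _ :=
        one_sub_le_ncard_lnorm_four_pow_rot_lt_div (zero_lt_one.trans (hgt k)) r (by positivity)

/-- For `V` uniform on `𝒱_n`, `Pr(‖V_r‖₄⁴ < 288 ψ(n)² log n) → 1`. -/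
theorem stmt_16 (N : ℕ → ℕ) (hmono : StrictMono N)
    (hodd : ∀ k, Odd (N k)) (hsqf : ∀ k, Squarefree (N k)) (hgt : ∀ k, 1 < N k)
    (r : ℝ) :
    Tendsto (fun k =>
        (Set.ncard {V ∈ VSet (N k) |
            (lnorm 4 (rot (N k) r V)) ^ 4 <
              288 * ((N k : ℝ) - (Nat.totient (N k) : ℝ)) ^ 2 * Real.log (N k)} : ℝ) /
          (Set.ncard (VSet (N k)) : ℝ))
      atTop (nhds 1) :=
  stmt_16_general N hmono hgt r
end
end

section
/- Let n > 1 be an odd square-free integer with smallest prime factor p_n, and let V(z) = ∑_{0≤j≤n−1, gcd(j,n)>1} z^j. Then for every u in the set {n/p_n, 2n/p_n, …, (p_n−1)n/p_n}, V(ζ_n^u) = φ(n)/(p_n − 1). -/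
noncomputable section

open Polynomial Filter

/-! `ζ = ζ_n^{t n/p}` is a primitive `p`-th root of unity, so `∑_{j<n} ζ^j = 0` and `V(ζ)` is minus
the Ramanujan sum `∑_{gcd(j,n)=1} ζ^j`. Since `ζ^j` depends only on `j mod p`, the Chinese remainder
isomorphism `(ℤ/pm)ˣ ≃ (ℤ/p)ˣ × (ℤ/m)ˣ` (with `m = n/p` coprime to `p` by squarefreeness) turns that
sum into `φ(m) ∑_{a ∈ (ℤ/p)ˣ} ζ^a = -φ(m)`, and `φ(n) = (p - 1) φ(m)`. -/

open Finset

namespace ZMod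

theorem sum_units_val_eq_sum_filter_coprime {M : Type*} [AddCommMonoid M] (n : ℕ) [NeZero n]
    (f : ℕ → M) : ∑ x : (ZMod n)ˣ, f (x : ZMod n).val = ∑ j ∈ range n with j.Coprime n, f j := by
  refine sum_bij (fun x _ => (x : ZMod n).val) (fun _ _ => ?_) (fun x _ y _ h => ?_)
    (fun j hj => ?_) (fun _ _ => rfl)
  · exact mem_filter.mpr ⟨mem_range.mpr (val_lt _), val_coe_unit_coprime _⟩
  · exact Units.ext (val_injective n h)
  · obtain ⟨hjn, hcop⟩ := mem_filter.mp hj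
    exact ⟨unitOfCoprime j hcop, mem_univ _, by
      rw [coe_unitOfCoprime, val_natCast, Nat.mod_eq_of_lt (mem_range.mp hjn)]⟩

theorem sum_units_comp_unitsMap_of_coprime {M : Type*} [AddCommMonoid M] {p m : ℕ} [NeZero p]
    [NeZero m] (h : p.Coprime m) (f : (ZMod p)ˣ → M) :
    ∑ x : (ZMod (p * m))ˣ, f (unitsMap (dvd_mul_right p m) x) = m.totient • ∑ a, f a := by
  let e : (ZMod (p * m))ˣ ≃* (ZMod p)ˣ × (ZMod m)ˣ :=
    (Units.mapEquiv (chineseRemainder h).toMulEquiv).trans MulEquiv.prodUnits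
  have he : ∀ x, (e x).1 = unitsMap (dvd_mul_right p m) x := fun x => by
    ext
    show (chineseRemainder h (x : ZMod (p * m))).1 = cast (x : ZMod (p * m))
    conv_lhs => rw [← natCast_zmod_val (x : ZMod (p * m)), map_natCast]
    rw [Prod.fst_natCast, cast_eq_val]
  rw [Fintype.sum_equiv e.toEquiv _ (fun y => f y.1) (fun x => by rw [← he]; rfl),
    Fintype.sum_prod_type]
  simp [smul_sum]

end ZMod

namespace IsPrimitiveRoot

variable {R : Type*} [CommRing R] [IsDomain R] {ζ : R} {p : ℕ}

theorem sum_units_zmod_pow_val [hp : Fact p.Prime] (hζ : IsPrimitiveRoot ζ p) :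
    ∑ a : (ZMod p)ˣ, ζ ^ (a : ZMod p).val = -1 := by
  have hunits : {j ∈ range p | j.Coprime p} = (range p).erase 0 := by
    ext j
    simp only [mem_filter, mem_erase, mem_range]
    constructor
    · rintro ⟨hj, hcop⟩
      refine ⟨?_, hj⟩
      rintro rfl
      exact hp.out.ne_one (Nat.coprime_zero_left p |>.mp hcop)
    · rintro ⟨hj0, hj⟩
      exact ⟨hj, (Nat.coprime_of_lt_prime hj0 hj hp.out).symm⟩
  rw [ZMod.sum_units_val_eq_sum_filter_coprime p (ζ ^ ·), hunits,
    sum_erase_eq_sub (mem_range.mpr hp.out.pos), hζ.geom_sum_eq_zero hp.out.one_lt, pow_zero,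
    zero_sub]

theorem sum_filter_coprime_pow_eq_neg_totient (hp : p.Prime) {m : ℕ} (hm : m ≠ 0)
    (hpm : p.Coprime m) (hζ : IsPrimitiveRoot ζ p) :
    ∑ j ∈ range (p * m) with j.Coprime (p * m), ζ ^ j = -(m.totient : R) := by
  have : Fact p.Prime := ⟨hp⟩
  have : NeZero m := ⟨hm⟩
  have hval : ∀ x : (ZMod (p * m))ˣ,
      ζ ^ (x : ZMod (p * m)).val = ζ ^ (ZMod.unitsMap (dvd_mul_right p m) x : ZMod p).val := by
    intro x
    rw [ZMod.unitsMap_val, ZMod.cast_eq_val, ZMod.val_natCast, ← pow_eq_pow_mod _ hζ.pow_eq_one]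
  rw [← ZMod.sum_units_val_eq_sum_filter_coprime, Fintype.sum_congr _ _ hval,
    ZMod.sum_units_comp_unitsMap_of_coprime hpm (fun a => ζ ^ (a : ZMod p).val),
    hζ.sum_units_zmod_pow_val, nsmul_eq_mul, mul_neg_one]

end IsPrimitiveRoot

theorem eval_Vall (n : ℕ) (z : ℂ) : (Vall n).eval z = ∑ j ∈ range n with ¬ j.Coprime n, z ^ j := by
  rw [Vall, eval_finsetSum, sum_filter]
  refine sum_congr rfl fun j _ => ?_
  split_ifs <;> simp_all

theorem IsPrimitiveRoot.eval_Vall_prime_mul {ζ : ℂ} {p m : ℕ} (hp : p.Prime) (hm : m ≠ 0)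
    (hpm : p.Coprime m) (hζ : IsPrimitiveRoot ζ p) : (Vall (p * m)).eval ζ = m.totient := by
  have htotal : ∑ j ∈ range (p * m), ζ ^ j = 0 := by
    have h := geom_sum_mul ζ (p * m)
    rw [pow_mul, hζ.pow_eq_one, one_pow, sub_self] at h
    exact (mul_eq_zero.mp h).resolve_right (sub_ne_zero.mpr (hζ.ne_one hp.one_lt))
  rw [← sum_filter_add_sum_filter_not (range (p * m)) (fun j => j.Coprime (p * m)),
    hζ.sum_filter_coprime_pow_eq_neg_totient hp hm hpm] at htotal
  rw [eval_Vall]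
  linear_combination htotal

theorem isPrimitiveRoot_zetaC_pow_mul_div {n p t : ℕ} (hn : n ≠ 0) (hpn : p ∣ n)
    (ht : t.Coprime p) : IsPrimitiveRoot (zetaC n ^ (t * (n / p))) p := by
  rw [mul_comm, pow_mul]
  exact ((Complex.isPrimitiveRoot_exp n hn).pow (Nat.pos_of_ne_zero hn)
    (Nat.div_mul_cancel hpn).symm).pow_of_coprime t ht

theorem stmt_17_general (n : ℕ) (hn : 1 < n) (hsqf : Squarefree n) :
    ∀ t : ℕ, 1 ≤ t → t ≤ n.minFac - 1 →
      (Vall n).eval (zetaC n ^ (t * (n / n.minFac))) =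
        (Nat.totient n : ℂ) / ((n.minFac : ℂ) - 1) := by
  intro t ht1 ht2
  set p := n.minFac
  have hp : p.Prime := Nat.minFac_prime (by omega)
  have hn_eq : p * (n / p) = n := Nat.mul_div_cancel' (Nat.minFac_dvd n)
  have hpm : p.Coprime (n / p) := Nat.coprime_of_squarefree_mul (by rwa [hn_eq])
  have hm : n / p ≠ 0 := (Nat.div_pos (Nat.minFac_le (by omega)) hp.pos).ne'
  have ht : t.Coprime p := (Nat.coprime_of_lt_prime (by omega) (by omega) hp).symm
  have hζ := isPrimitiveRoot_zetaC_pow_mul_div (by omega) (Nat.minFac_dvd n) ht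
  have hval := hζ.eval_Vall_prime_mul hp hm hpm
  rw [hn_eq] at hval
  have hp1 : (p : ℂ) - 1 ≠ 0 := sub_ne_zero.mpr (by exact_mod_cast hp.ne_one)
  have htot : n.totient = (p - 1) * (n / p).totient := by
    rw [← Nat.totient_prime hp, ← Nat.totient_mul hpm, hn_eq]
  rw [hval, eq_div_iff hp1, htot]
  push_cast [Nat.cast_sub hp.one_le]
  ring

/-- For odd square-free `n > 1` with smallest prime factor `p = n.minFac` and
`V(z) = ∑_{gcd(j,n)>1} z^j`, every `u ∈ {n/p, 2n/p, …, (p-1)n/p}` satisfies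
`V(ζ_n^u) = φ(n)/(p-1)`. -/
theorem stmt_17 (n : ℕ) (hn : 1 < n) (hodd : Odd n) (hsqf : Squarefree n) :
    ∀ t : ℕ, 1 ≤ t → t ≤ n.minFac - 1 →
      (Vall n).eval (zetaC n ^ (t * (n / n.minFac))) =
        (Nat.totient n : ℂ) / ((n.minFac : ℂ) - 1) :=
  stmt_17_general n hn hsqf
end
end
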